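/- arXiv:1911.08984 — 9 statements merged into one kernel-verified Lean document; each statement's English description precedes it below -/
import Mathlib

section
/- The pointwise infimum of a chain (a family totally ordered by the pointwise order) of 𝒯-quasiconvex functions f_α : D → [-∞, +∞) is 𝒯-quasiconvex. -/
theorem iInf_max_le_max_iInf_of_chain {ι α : Type*} [CompleteLinearOrder α] {g h : ι → α}
    (hchain : ∀ i j, (g i ≤ g j ∧ h i ≤ h j) ∨ (g j ≤ g i ∧ h j ≤ h i)) :
    ⨅ i, max (g i) (h i) ≤ max (⨅ i, g i) (⨅ i, h i) := by
  by_contra! hlt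
  obtain ⟨i, hi⟩ := iInf_lt_iff.mp ((le_max_left _ _).trans_lt hlt)
  obtain ⟨j, hj⟩ := iInf_lt_iff.mp ((le_max_right _ _).trans_lt hlt)
  -- Whichever of `i`, `j` is lower in the chain has both values below the infimum of the maxima.
  rcases hchain i j with ⟨-, hij⟩ | ⟨hji, -⟩
  · exact (iInf_le (fun k => max (g k) (h k)) i).not_gt (max_lt hi (hij.trans_lt hj))
  · exact (iInf_le (fun k => max (g k) (h k)) j).not_gt (max_lt (hji.trans_lt hi) hj)

theorem stmt3_general {X : Type*} [AddCommGroup X] (𝒯 : Set (X →+ X)) (D : Set X)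
    {ι : Type*} (f : ι → X → EReal)
    (hchain : ∀ i j, (∀ x ∈ D, f i x ≤ f j x) ∨ (∀ x ∈ D, f j x ≤ f i x))
    (hqc : ∀ i, ∀ T ∈ 𝒯, ∀ x ∈ D, ∀ y ∈ D, f i (T x + (y - T y)) ≤ max (f i x) (f i y)) :
    ∀ T ∈ 𝒯, ∀ x ∈ D, ∀ y ∈ D,
      (⨅ i, f i (T x + (y - T y))) ≤ max (⨅ i, f i x) (⨅ i, f i y) := by
  intro T hT x hx y hy
  calc ⨅ i, f i (T x + (y - T y)) ≤ ⨅ i, max (f i x) (f i y) :=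
        iInf_mono fun i => hqc i T hT x hx y hy
    _ ≤ max (⨅ i, f i x) (⨅ i, f i y) :=
        iInf_max_le_max_iInf_of_chain fun i j =>
          (hchain i j).imp (fun h => ⟨h x hx, h y hy⟩) (fun h => ⟨h x hx, h y hy⟩)

/-- The pointwise infimum of a chain of `𝒯`-quasiconvex functions is
`𝒯`-quasiconvex. -/
theorem stmt3 {X : Type*} [AddCommGroup X] (𝒯 : Set (X →+ X)) (D : Set X)
    (hD : ∀ T ∈ 𝒯, ∀ x ∈ D, ∀ y ∈ D, T x + (y - T y) ∈ D)
    {ι : Type*} [Nonempty ι] (f : ι → X → EReal)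
    (hchain : ∀ i j, (∀ x ∈ D, f i x ≤ f j x) ∨ (∀ x ∈ D, f j x ≤ f i x))
    (hqc : ∀ i, ∀ T ∈ 𝒯, ∀ x ∈ D, ∀ y ∈ D, f i (T x + (y - T y)) ≤ max (f i x) (f i y)) :
    ∀ T ∈ 𝒯, ∀ x ∈ D, ∀ y ∈ D,
      (⨅ i, f i (T x + (y - T y))) ≤ max (⨅ i, f i x) (⨅ i, f i y) :=
  stmt3_general 𝒯 D f hchain hqc
end

section
/- If f : D → [-∞, +∞) and g : E → [-∞, +∞) are 𝒯-quasiconvex functions on 𝒯-convex sets D, E ⊆ X, then the infimal max-convolution (f ◇ g)(x) := inf{ max(f(u), g(v)) : u ∈ D, v ∈ E, u + v = x } is 𝒯-quasiconvex on D + E. -/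
open scoped Pointwise

section TConvexity

variable {X : Type*} [AddCommGroup X]

/-- `𝒯`-convexity, with `(I - T) y` written as `y - T y`. -/
def IsTConvex (𝒯 : Set (X →+ X)) (D : Set X) : Prop :=
  ∀ T ∈ 𝒯, ∀ x ∈ D, ∀ y ∈ D, T x + (y - T y) ∈ D

def TQuasiconvexOn {α : Type*} [LinearOrder α] (𝒯 : Set (X →+ X)) (D : Set X) (f : X → α) :
    Prop :=
  ∀ T ∈ 𝒯, ∀ x ∈ D, ∀ y ∈ D, f (T x + (y - T y)) ≤ max (f x) (f y)

def infMaxConv {α : Type*} [CompleteLinearOrder α] (D E : Set X) (f g : X → α) (x : X) : α :=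
  sInf {m : α | ∃ u ∈ D, ∃ v ∈ E, u + v = x ∧ m = max (f u) (g v)}

theorem AddMonoidHom.map_add_add_sub_map_add (T : X →+ X) (x₁ x₂ y₁ y₂ : X) :
    T (x₁ + x₂) + ((y₁ + y₂) - T (y₁ + y₂)) =
      (T x₁ + (y₁ - T y₁)) + (T x₂ + (y₂ - T y₂)) := by
  simp only [map_add]
  abel

end TConvexity

theorem sInf_le_max_sInf_of_forall_exists_le {α : Type*} [CompleteLinearOrder α]
    {A B C : Set α} (h : ∀ a ∈ A, ∀ b ∈ B, ∃ c ∈ C, c ≤ max a b) :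
    sInf C ≤ max (sInf A) (sInf B) := by
  by_contra! hlt
  obtain ⟨a, ha, haC⟩ := sInf_lt_iff.mp ((le_max_left _ _).trans_lt hlt)
  obtain ⟨b, hb, hbC⟩ := sInf_lt_iff.mp ((le_max_right _ _).trans_lt hlt)
  obtain ⟨c, hc, hcab⟩ := h a ha b hb
  exact (sInf_le hc).not_gt ((hcab.trans_lt (max_lt haC hbC)))

theorem TQuasiconvexOn.infMaxConv {X α : Type*} [AddCommGroup X] [CompleteLinearOrder α]
    {𝒯 : Set (X →+ X)} {D E : Set X} {f g : X → α} (hD : IsTConvex 𝒯 D) (hE : IsTConvex 𝒯 E)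
    (hf : TQuasiconvexOn 𝒯 D f) (hg : TQuasiconvexOn 𝒯 E g) :
    TQuasiconvexOn 𝒯 (D + E) (infMaxConv D E f g) := by
  intro T hT x _ y _
  apply sInf_le_max_sInf_of_forall_exists_le
  rintro _ ⟨u₁, hu₁, v₁, hv₁, rfl, rfl⟩ _ ⟨u₂, hu₂, v₂, hv₂, rfl, rfl⟩
  refine ⟨_, ⟨_, hD T hT u₁ hu₁ u₂ hu₂, _, hE T hT v₁ hv₁ v₂ hv₂,
    (T.map_add_add_sub_map_add u₁ v₁ u₂ v₂).symm, rfl⟩, ?_⟩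
  calc max (f (T u₁ + (u₂ - T u₂))) (g (T v₁ + (v₂ - T v₂)))
      ≤ max (max (f u₁) (f u₂)) (max (g v₁) (g v₂)) :=
        max_le_max (hf T hT u₁ hu₁ u₂ hu₂) (hg T hT v₁ hv₁ v₂ hv₂)
    _ = max (max (f u₁) (g v₁)) (max (f u₂) (g v₂)) := max_max_max_comm _ _ _ _

theorem stmt4_general {X : Type*} [AddCommGroup X] (𝒯 : Set (X →+ X))
    (D E : Set X)
    (hD : ∀ T ∈ 𝒯, ∀ x ∈ D, ∀ y ∈ D, T x + (y - T y) ∈ D)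
    (hE : ∀ T ∈ 𝒯, ∀ x ∈ E, ∀ y ∈ E, T x + (y - T y) ∈ E)
    (f g : X → EReal)
    (hf : ∀ T ∈ 𝒯, ∀ x ∈ D, ∀ y ∈ D, f (T x + (y - T y)) ≤ max (f x) (f y))
    (hg : ∀ T ∈ 𝒯, ∀ x ∈ E, ∀ y ∈ E, g (T x + (y - T y)) ≤ max (g x) (g y))
    (h : X → EReal)
    (hdef : ∀ x, h x = sInf {m : EReal | ∃ u ∈ D, ∃ v ∈ E, u + v = x ∧ m = max (f u) (g v)}) :
    ∀ T ∈ 𝒯, ∀ x ∈ D + E, ∀ y ∈ D + E,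
      h (T x + (y - T y)) ≤ max (h x) (h y) := by
  obtain rfl : h = infMaxConv D E f g := funext hdef
  exact TQuasiconvexOn.infMaxConv hD hE hf hg

/-- The infimal max-convolution of two `𝒯`-quasiconvex functions is
`𝒯`-quasiconvex on `D + E`. -/
theorem stmt4 {X : Type*} [AddCommGroup X] (𝒯 : Set (X →+ X)) (h𝒯 : 𝒯.Nonempty)
    (D E : Set X)
    (hD : ∀ T ∈ 𝒯, ∀ x ∈ D, ∀ y ∈ D, T x + (y - T y) ∈ D)
    (hE : ∀ T ∈ 𝒯, ∀ x ∈ E, ∀ y ∈ E, T x + (y - T y) ∈ E)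
    (f g : X → EReal) (hftop : ∀ x ∈ D, f x ≠ ⊤) (hgtop : ∀ x ∈ E, g x ≠ ⊤)
    (hf : ∀ T ∈ 𝒯, ∀ x ∈ D, ∀ y ∈ D, f (T x + (y - T y)) ≤ max (f x) (f y))
    (hg : ∀ T ∈ 𝒯, ∀ x ∈ E, ∀ y ∈ E, g (T x + (y - T y)) ≤ max (g x) (g y))
    (h : X → EReal)
    (hdef : ∀ x, h x = sInf {m : EReal | ∃ u ∈ D, ∃ v ∈ E, u + v = x ∧ m = max (f u) (g v)}) :
    ∀ T ∈ 𝒯, ∀ x ∈ D + E, ∀ y ∈ D + E,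
      h (T x + (y - T y)) ≤ max (h x) (h y) :=
  stmt4_general 𝒯 D E hD hE f g hf hg h hdef
end

section
/- Let D ⊆ X and f : D → [-∞,+∞). The set 𝒯_f of endomorphisms T of X for which f is T-quasiconvex is closed under the operation (T, S) ↦ T∘T₁ + (I−T)∘T₂ in the sense that if T, T₁, T₂ ∈ 𝒯_f then T∘T₁ + (I−T)∘T₂ ∈ 𝒯_f. In particular, 𝒯_f is closed under composition and under T ↦ I−T. -/
/-- `f` is `S`-quasiconvex on `D`: `D` is `S`-convex and the quasiconvexity
inequality holds. -/
def IsQuasiconvexEndo {X : Type*} [AddCommGroup X] (D : Set X) (f : X → EReal)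
    (S : X →+ X) : Prop :=
  (∀ x ∈ D, ∀ y ∈ D, S x + (y - S y) ∈ D) ∧
  (∀ x ∈ D, ∀ y ∈ D, f (S x + (y - S y)) ≤ max (f x) (f y))

/-! The `T∘T₁ + (I−T)∘T₂`-combination of `x, y` is the `T`-combination of the
`T₁`- and `T₂`-combinations of `x, y`; so convexity of `D` and the quasiconvexity
inequality pass through two layers.  Composition and `I − T` are the cases
`T₂ = 0` and `(T₁, T₂) = (0, I)`. -/

namespace IsQuasiconvexEndo

variable {X : Type*} [AddCommGroup X] {D : Set X} {f : X → EReal}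

theorem combination_apply (T T₁ T₂ : X →+ X) (x y : X) :
    (T.comp T₁ + (AddMonoidHom.id X - T).comp T₂) x +
        (y - (T.comp T₁ + (AddMonoidHom.id X - T).comp T₂) y) =
      T (T₁ x + (y - T₁ y)) + ((T₂ x + (y - T₂ y)) - T (T₂ x + (y - T₂ y))) := by
  simp only [AddMonoidHom.add_apply, AddMonoidHom.comp_apply, AddMonoidHom.sub_apply,
    AddMonoidHom.id_apply, map_add, map_sub]
  abel

theorem combination {T T₁ T₂ : X →+ X} (hT : IsQuasiconvexEndo D f T)
    (hT₁ : IsQuasiconvexEndo D f T₁) (hT₂ : IsQuasiconvexEndo D f T₂) :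
    IsQuasiconvexEndo D f (T.comp T₁ + (AddMonoidHom.id X - T).comp T₂) := by
  constructor
  · intro x hx y hy
    rw [combination_apply]
    exact hT.1 _ (hT₁.1 x hx y hy) _ (hT₂.1 x hx y hy)
  · intro x hx y hy
    rw [combination_apply]
    calc _ ≤ max (f (T₁ x + (y - T₁ y))) (f (T₂ x + (y - T₂ y))) :=
          hT.2 _ (hT₁.1 x hx y hy) _ (hT₂.1 x hx y hy)
      _ ≤ max (max (f x) (f y)) (max (f x) (f y)) :=
          max_le_max (hT₁.2 x hx y hy) (hT₂.2 x hx y hy)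
      _ = max (f x) (f y) := max_self _

theorem id : IsQuasiconvexEndo D f (AddMonoidHom.id X) :=
  ⟨fun x hx y _ => by simpa using hx, fun x _ y _ => by simp⟩

theorem zero : IsQuasiconvexEndo D f 0 :=
  ⟨fun x _ y hy => by simpa using hy, fun x _ y _ => by simp⟩

theorem comp {T T₁ : X →+ X} (hT : IsQuasiconvexEndo D f T)
    (hT₁ : IsQuasiconvexEndo D f T₁) : IsQuasiconvexEndo D f (T.comp T₁) := by
  have h := hT.combination hT₁ zero
  rwa [AddMonoidHom.comp_zero, add_zero] at h

theorem id_sub {T : X →+ X} (hT : IsQuasiconvexEndo D f T) :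
    IsQuasiconvexEndo D f (AddMonoidHom.id X - T) := by
  have h := hT.combination zero id
  rwa [AddMonoidHom.comp_zero, AddMonoidHom.comp_id, zero_add] at h

end IsQuasiconvexEndo

/-- `𝒯_f` is closed under `(T, T₁, T₂) ↦ T∘T₁ + (I−T)∘T₂`; in
particular under composition and under `T ↦ I − T`. -/
theorem stmt6 {X : Type*} [AddCommGroup X] (D : Set X) (f : X → EReal)
    (T T₁ T₂ : X →+ X)
    (hT : IsQuasiconvexEndo D f T) (hT₁ : IsQuasiconvexEndo D f T₁)
    (hT₂ : IsQuasiconvexEndo D f T₂) :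
    IsQuasiconvexEndo D f (T.comp T₁ + (AddMonoidHom.id X - T).comp T₂) ∧
    IsQuasiconvexEndo D f (T.comp T₁) ∧
    IsQuasiconvexEndo D f (AddMonoidHom.id X - T) :=
  ⟨hT.combination hT₁ hT₂, hT.comp hT₁, hT.id_sub⟩
end

section
/- If T and S are endomorphisms of X such that f : D → [-∞,+∞) is both T-Wright convex and S-Wright convex, then f is (T∘S + (I−T)∘(I−S))-Wright convex. Moreover, if f is T-Wright convex then f is (I−T)-Wright convex. -/
/-- `f` is `T`-Wright convex on `D`: `D` is `T`-convex and the Wright convexity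
inequality holds. -/
def IsWrightEndo {X : Type*} [AddCommGroup X] (D : Set X) (f : X → EReal)
    (T : X →+ X) : Prop :=
  (∀ x ∈ D, ∀ y ∈ D, T x + (y - T y) ∈ D) ∧
  (∀ x ∈ D, ∀ y ∈ D, f (T x + (y - T y)) + f ((x - T x) + T y) ≤ f x + f y)

/-!
Call `(T x + (y − T y), (x − T x) + T y)` the `T`-pair of `(x, y)`, and let
`R = T∘S + (I−T)∘(I−S)`. If `(u, v)` is the `S`-pair of `(x, y)`, then the `T`-pair of `(u, v)`
is exactly the `R`-pair of `(x, y)`, so `f` of the `R`-pair is at most `f u + f v`, which is at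
most `f x + f y`. For `I − T`, the `(I − T)`-pair of `(x, y)` is the `T`-pair of `(y, x)`.
-/

section

variable {X : Type*} [AddCommGroup X]

theorem comp_add_id_sub_comp_pair_fst (T S : X →+ X) (x y : X) :
    T (S x + (y - S y)) + ((x - S x + S y) - T (x - S x + S y)) =
      (T.comp S + (AddMonoidHom.id X - T).comp (AddMonoidHom.id X - S)) x +
        (y - (T.comp S + (AddMonoidHom.id X - T).comp (AddMonoidHom.id X - S)) y) := by
  simp only [AddMonoidHom.add_apply, AddMonoidHom.comp_apply, AddMonoidHom.sub_apply,
    AddMonoidHom.id_apply, map_add, map_sub]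
  abel

theorem comp_add_id_sub_comp_pair_snd (T S : X →+ X) (x y : X) :
    (S x + (y - S y) - T (S x + (y - S y))) + T (x - S x + S y) =
      (x - (T.comp S + (AddMonoidHom.id X - T).comp (AddMonoidHom.id X - S)) x) +
        (T.comp S + (AddMonoidHom.id X - T).comp (AddMonoidHom.id X - S)) y := by
  simp only [AddMonoidHom.add_apply, AddMonoidHom.comp_apply, AddMonoidHom.sub_apply,
    AddMonoidHom.id_apply, map_add, map_sub]
  abel

variable {D : Set X} {f : X → EReal} {T S : X →+ X}

theorem IsWrightEndo.sub_add_mem (hT : IsWrightEndo D f T) {x y : X} (hx : x ∈ D)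
    (hy : y ∈ D) : x - T x + T y ∈ D := by
  simpa only [add_comm] using hT.1 y hy x hx

theorem IsWrightEndo.comp_add_id_sub_comp (hT : IsWrightEndo D f T)
    (hS : IsWrightEndo D f S) :
    IsWrightEndo D f (T.comp S + (AddMonoidHom.id X - T).comp (AddMonoidHom.id X - S)) := by
  refine ⟨fun x hx y hy => ?_, fun x hx y hy => ?_⟩
  · rw [← comp_add_id_sub_comp_pair_fst]
    exact hT.1 _ (hS.1 x hx y hy) _ (hS.sub_add_mem hx hy)
  · rw [← comp_add_id_sub_comp_pair_fst, ← comp_add_id_sub_comp_pair_snd]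
    exact (hT.2 _ (hS.1 x hx y hy) _ (hS.sub_add_mem hx hy)).trans (hS.2 x hx y hy)

theorem IsWrightEndo.id_sub (hT : IsWrightEndo D f T) :
    IsWrightEndo D f (AddMonoidHom.id X - T) := by
  have pair_fst : ∀ x y : X, T y + (x - T x) =
      (AddMonoidHom.id X - T) x + (y - (AddMonoidHom.id X - T) y) := fun x y => by
    simp only [AddMonoidHom.sub_apply, AddMonoidHom.id_apply]
    abel
  have pair_snd : ∀ x y : X, T x + (y - T y) =
      (x - (AddMonoidHom.id X - T) x) + (AddMonoidHom.id X - T) y := fun x y => by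
    simp only [AddMonoidHom.sub_apply, AddMonoidHom.id_apply]
    abel
  refine ⟨fun x hx y hy => ?_, fun x hx y hy => ?_⟩
  · rw [← pair_fst]
    exact hT.1 y hy x hx
  · rw [← pair_snd, add_comm, ← pair_fst, add_comm (T y)]
    exact hT.2 x hx y hy

end

/-- If `f` is `T`- and `S`-Wright convex, then it is
`(T∘S + (I−T)∘(I−S))`-Wright convex; moreover `T`-Wright convexity implies
`(I−T)`-Wright convexity. -/
theorem stmt10 {X : Type*} [AddCommGroup X] (D : Set X) (f : X → EReal)
    (T S : X →+ X) (hT : IsWrightEndo D f T) (hS : IsWrightEndo D f S) :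
    IsWrightEndo D f (T.comp S + (AddMonoidHom.id X - T).comp (AddMonoidHom.id X - S)) ∧
    IsWrightEndo D f (AddMonoidHom.id X - T) :=
  ⟨hT.comp_add_id_sub_comp hS, hT.id_sub⟩
end

section
/- Let (X,+) be an abelian group, T₀ an endomorphism with T₀(X) = (I−T₀)(X), and suppose a : X → ℝ has the form a(x) = B(x,x) + A(x) + c with A : X → ℝ additive, B : X × X → ℝ symmetric biadditive, and c ∈ ℝ. Then for an endomorphism T, a satisfies a(T(x)+(I−T)(y)) + a((I−T)(x)+T(y)) = a(x) + a(y) for all x, y ∈ X if and only if B(T(u), (I−T)(u)) = 0 for all u ∈ X. -/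
/-!
Writing `d = x - y` and `w = T d`, the two arguments of `a` on the left are `y + w` and `x - w`.
They have the same sum as `x` and `y`, so the additive and constant parts of `a` cancel, and
expanding the quadratic part leaves the defect `2 B(w, d - w) = 2 B(T d, (I - T) d)`.
Hence the functional equation holds iff this defect vanishes for every `d = x - y`, i.e. for
every `u`.
-/

section Biadditive

variable {X M : Type*} [AddCommGroup X] [AddCommGroup M]

def AddMonoidHom.mkOfSymm (B : X → X → M) (hsymm : ∀ x y, B x y = B y x)
    (hadd : ∀ x y z, B (x + y) z = B x z + B y z) : X →+ X →+ M :=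
  AddMonoidHom.mk' (fun x => AddMonoidHom.mk' (B x) fun y z => by
      rw [hsymm, hadd, hsymm y, hsymm z])
    fun x y => AddMonoidHom.ext fun z => hadd x y z

@[simp]
theorem AddMonoidHom.mkOfSymm_apply (B : X → X → M) (hsymm : ∀ x y, B x y = B y x)
    (hadd : ∀ x y z, B (x + y) z = B x z + B y z) (x y : X) :
    AddMonoidHom.mkOfSymm B hsymm hadd x y = B x y :=
  rfl

theorem biadd_diag_add_diag_sub (β : X →+ X →+ M) (hsymm : ∀ x y, β x y = β y x)
    (x y w : X) :
    β (y + w) (y + w) + β (x - w) (x - w) = β x x + β y y - 2 • β w (x - y - w) := by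
  simp only [map_add, map_sub, AddMonoidHom.add_apply, AddMonoidHom.sub_apply, two_nsmul]
  rw [hsymm w y, hsymm w x]
  abel

end Biadditive

theorem quadratic_add_affine_wright_defect {X : Type*} [AddCommGroup X] (A : X →+ ℝ)
    (β : X →+ X →+ ℝ) (hsymm : ∀ x y, β x y = β y x) (c : ℝ) (a : X → ℝ)
    (ha : ∀ x, a x = β x x + A x + c) (T : X →+ X) (x y : X) :
    a (T x + (y - T y)) + a ((x - T x) + T y) =
      a x + a y - 2 * β (T (x - y)) ((x - y) - T (x - y)) := by
  set w := T (x - y) with hw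
  have hleft : T x + (y - T y) = y + w := by rw [hw, map_sub]; abel
  have hright : (x - T x) + T y = x - w := by rw [hw, map_sub]; abel
  have hlin : A (y + w) + A (x - w) = A x + A y := by rw [map_add, map_sub]; ring
  have hquad := biadd_diag_add_diag_sub β hsymm x y w
  rw [two_nsmul] at hquad
  rw [hleft, hright, ha, ha, ha, ha]
  linarith

theorem stmt12_general {X : Type*} [AddCommGroup X]
    (A : X →+ ℝ) (B : X → X → ℝ)
    (hBsymm : ∀ x y, B x y = B y x)
    (hBadd : ∀ x y z, B (x + y) z = B x z + B y z)
    (c : ℝ) (a : X → ℝ) (ha : ∀ x, a x = B x x + A x + c)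
    (T : X →+ X) :
    (∀ x y : X, a (T x + (y - T y)) + a ((x - T x) + T y) = a x + a y) ↔
    (∀ u : X, B (T u) (u - T u) = 0) := by
  have hdefect := quadratic_add_affine_wright_defect A (AddMonoidHom.mkOfSymm B hBsymm hBadd)
    hBsymm c a ha T
  simp only [AddMonoidHom.mkOfSymm_apply] at hdefect
  constructor
  · intro h u
    have hu := hdefect u 0
    rw [h, sub_zero] at hu
    linarith
  · intro h x y
    rw [hdefect, h, mul_zero, sub_zero]

/-- For `a(x) = B(x,x) + A(x) + c` with `A` additive and `B`
symmetric biadditive, and `T₀` an endomorphism with `T₀(X) = (I−T₀)(X)`,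
`a` is `T`-Wright affine iff `B(T(u), (I−T)(u)) = 0` for all `u`. -/
theorem stmt12 {X : Type*} [AddCommGroup X]
    (T₀ : X →+ X) (hT₀ : Set.range ⇑T₀ = Set.range ⇑(AddMonoidHom.id X - T₀))
    (A : X →+ ℝ) (B : X → X → ℝ)
    (hBsymm : ∀ x y, B x y = B y x)
    (hBadd : ∀ x y z, B (x + y) z = B x z + B y z)
    (c : ℝ) (a : X → ℝ) (ha : ∀ x, a x = B x x + A x + c)
    (T : X →+ X) :
    (∀ x y : X, a (T x + (y - T y)) + a ((x - T x) + T y) = a x + a y) ↔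
    (∀ u : X, B (T u) (u - T u) = 0) :=
  stmt12_general A B hBsymm hBadd c a ha T
end

section
/- Let (T,t) be a pair consisting of an endomorphism T of X and t ∈ (0,1), D ⊆ X a T-convex set, and f : D → [-∞,+∞) a (T,t)-convex function (f(T(x)+(I−T)(y)) ≤ t·f(x) + (1−t)·f(y)). If f(p) > −∞ for some point p ∈ D that is T-internal with respect to D, then f(x) ∈ ℝ for all x ∈ D. -/
/-! Since `t` and `1 - t` are positive, a value `⊥` at `x` or `y` forces
`f (T x + (y - T y)) = ⊥`. Hence `{x ∈ D | f x ≠ ⊥}` is a subset of `D` containing `p` that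
contains `x` and `y` whenever it contains `T x + (y - T y)`; as `p` is `T`-internal, it is all
of `D`, and together with `f ≠ ⊤` this makes `f` real-valued on `D`. -/

lemma EReal.coe_mul_add_coe_mul_eq_bot {a b : ℝ} (ha : 0 < a) (hb : 0 < b) {x y : EReal}
    (h : x = ⊥ ∨ y = ⊥) : (a : EReal) * x + (b : EReal) * y = ⊥ := by
  rcases h with rfl | rfl
  · rw [EReal.coe_mul_bot_of_pos ha, EReal.bot_add]
  · rw [EReal.coe_mul_bot_of_pos hb, EReal.add_bot]

lemma ne_bot_of_convex_combination_ne_bot {X : Type*} [AddCommGroup X] {D : Set X}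
    {T : X →+ X} {t : ℝ} (ht0 : 0 < t) (ht1 : t < 1) {f : X → EReal}
    (hconv : ∀ x ∈ D, ∀ y ∈ D,
      f (T x + (y - T y)) ≤ (t : EReal) * f x + ((1 - t : ℝ) : EReal) * f y)
    {x y : X} (hx : x ∈ D) (hy : y ∈ D) (hxy : f (T x + (y - T y)) ≠ ⊥) :
    f x ≠ ⊥ ∧ f y ≠ ⊥ := by
  by_contra h
  have hbot := EReal.coe_mul_add_coe_mul_eq_bot ht0 (sub_pos.mpr ht1)
    (by simpa only [not_and_or, not_not] using h)
  exact hxy (le_bot_iff.mp (hbot ▸ hconv x hx y hy))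

theorem stmt13_general {X : Type*} [AddCommGroup X] (D : Set X) (T : X →+ X)
    (t : ℝ) (ht0 : 0 < t) (ht1 : t < 1)
    (f : X → EReal) (hftop : ∀ x ∈ D, f x ≠ ⊤)
    (hconv : ∀ x ∈ D, ∀ y ∈ D,
      f (T x + (y - T y)) ≤ (t : EReal) * f x + ((1 - t : ℝ) : EReal) * f y)
    (p : X) (hp : p ∈ D) (hpfin : f p ≠ ⊥)
    (hint : ∀ E : Set X, E ⊆ D → p ∈ E →
      (∀ x ∈ D, ∀ y ∈ D, T x + (y - T y) ∈ E → x ∈ E ∧ y ∈ E) → E = D) :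
    ∀ x ∈ D, ∃ r : ℝ, f x = (r : EReal) := by
  have hfinite : {x | x ∈ D ∧ f x ≠ ⊥} = D := by
    refine hint _ (fun x hx => hx.1) ⟨hp, hpfin⟩ fun x hx y hy hxy => ?_
    obtain ⟨hfx, hfy⟩ := ne_bot_of_convex_combination_ne_bot ht0 ht1 hconv hx hy hxy.2
    exact ⟨⟨hx, hfx⟩, ⟨hy, hfy⟩⟩
  intro x hx
  have hfx : f x ≠ ⊥ := (hfinite.symm ▸ hx : x ∈ {x | x ∈ D ∧ f x ≠ ⊥}).2
  exact ⟨(f x).toReal, (EReal.coe_toReal (hftop x hx) hfx).symm⟩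

/-- If `f : D → [-∞,∞)` is `(T,t)`-convex with `t ∈ (0,1)` and
`f(p) > -∞` at some `T`-internal point `p` of `D`, then `f` is real-valued on
all of `D`. -/
theorem stmt13 {X : Type*} [AddCommGroup X] (D : Set X) (T : X →+ X)
    (hD : ∀ x ∈ D, ∀ y ∈ D, T x + (y - T y) ∈ D)
    (t : ℝ) (ht0 : 0 < t) (ht1 : t < 1)
    (f : X → EReal) (hftop : ∀ x ∈ D, f x ≠ ⊤)
    (hconv : ∀ x ∈ D, ∀ y ∈ D,
      f (T x + (y - T y)) ≤ (t : EReal) * f x + ((1 - t : ℝ) : EReal) * f y)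
    (p : X) (hp : p ∈ D) (hpfin : f p ≠ ⊥)
    (hint : ∀ E : Set X, E ⊆ D → p ∈ E →
      (∀ x ∈ D, ∀ y ∈ D, T x + (y - T y) ∈ E → x ∈ E ∧ y ∈ E) → E = D) :
    ∀ x ∈ D, ∃ r : ℝ, f x = (r : EReal) :=
  stmt13_general D T t ht0 ht1 f hftop hconv p hp hpfin hint
end

section
/- Let T be an endomorphism of the abelian group X such that T(X) ⊆ (I−T)(X) or (I−T)(X) ⊆ T(X). Then every element p of X is T-internal with respect to X; in fact, for every p ∈ X, {x ∈ X : ∃ y ∈ X, T(x)+(I−T)(y) = p or T(y)+(I−T)(x) = p} = X. -/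
/-! Write `S = I - T`, so that `T + S = I`. If `T(X) ⊆ S(X)`, then for any `x, p` choose `w` with
`S w = T (p - x)`; taking `y = w + p` gives `T x + S y = T p + S p = p`. The other inclusion is the
same argument with `T` and `S` exchanged. So every `x` occurs as an argument of some
`T(·) + S(·)` equal to `p`, and any `E ∋ p` closed under taking arguments must contain every `x`. -/

theorem AddMonoidHom.exists_add_eq_of_range_subset {X : Type*} [AddCommGroup X] {A B : X →+ X}
    (hAB : ∀ x, A x + B x = x) (h : Set.range A ⊆ Set.range B) (x p : X) :
    ∃ y, A x + B y = p := by
  obtain ⟨w, hw⟩ := h ⟨p - x, rfl⟩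
  refine ⟨w + p, ?_⟩
  rw [map_add, hw, map_sub]
  linear_combination (norm := abel) hAB p

theorem AddMonoidHom.exists_apply_add_sub_eq {X : Type*} [AddCommGroup X] {T : X →+ X}
    (h : Set.range T ⊆ Set.range (fun x : X => x - T x) ∨
      Set.range (fun x : X => x - T x) ⊆ Set.range T) (p x : X) :
    ∃ y, T x + (y - T y) = p ∨ T y + (x - T x) = p := by
  rcases h with h | h
  · obtain ⟨y, hy⟩ := exists_add_eq_of_range_subset (B := AddMonoidHom.id X - T)
      (fun x => add_sub_cancel (T x) x) h x p
    exact ⟨y, .inl hy⟩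
  · obtain ⟨y, hy⟩ := exists_add_eq_of_range_subset (A := AddMonoidHom.id X - T)
      (fun x => sub_add_cancel x (T x)) h x p
    exact ⟨y, .inr ((add_comm _ _).trans hy)⟩

theorem Set.eq_univ_of_forall_exists_eq_of_closed {α : Type*} (f : α → α → α) {p : α}
    {E : Set α} (hcover : ∀ x, ∃ y, f x y = p ∨ f y x = p) (hp : p ∈ E)
    (hE : ∀ x y, f x y ∈ E → x ∈ E ∧ y ∈ E) : E = Set.univ := by
  refine Set.eq_univ_of_forall fun x => ?_
  obtain ⟨y, hy | hy⟩ := hcover x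
  · exact (hE x y (hy ▸ hp)).1
  · exact (hE y x (hy ▸ hp)).2

/-- If `T(X) ⊆ (I−T)(X)` or `(I−T)(X) ⊆ T(X)`, then every `p ∈ X`
is `T`-internal with respect to `X`; in fact the set
`{x | ∃ y, T(x)+(I−T)(y) = p or T(y)+(I−T)(x) = p}` is all of `X`. -/
theorem stmt14 {X : Type*} [AddCommGroup X] (T : X →+ X)
    (h : Set.range ⇑T ⊆ Set.range (fun x : X => x - T x) ∨
      Set.range (fun x : X => x - T x) ⊆ Set.range ⇑T) :
    ∀ p : X,
      ({x : X | ∃ y : X, T x + (y - T y) = p ∨ T y + (x - T x) = p} = Set.univ) ∧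
      (∀ E : Set X, p ∈ E →
        (∀ x y : X, T x + (y - T y) ∈ E → x ∈ E ∧ y ∈ E) → E = Set.univ) := by
  intro p
  have hcover := AddMonoidHom.exists_apply_add_sub_eq h p
  exact ⟨Set.eq_univ_of_forall hcover, fun E hp hE =>
    Set.eq_univ_of_forall_exists_eq_of_closed (fun x y => T x + (y - T y)) hcover hp hE⟩
end

section
/- Let ℛ be a nonempty set of pairs (T,t) with T an endomorphism of X and t ∈ [0,1]. A function f : D → [-∞,+∞) is ℛ-convex (i.e., D is T-convex and f(T(x)+(I−T)(y)) ≤ t f(x) + (1−t) f(y) for all x,y ∈ D and (T,t) ∈ ℛ) if and only if its epigraph epi(f) = {(x,u) ∈ D × ℝ : f(x) ≤ u} is ℛ-convex as a subset of X × ℝ, where (T,t) acts on X × ℝ by (T,t)(x,u) = (T(x), t·u). -/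
/-!
Points of the epigraph over `x` and `y` are exactly the real upper bounds `a ≥ f x`, `b ≥ f y`,
so the epigraph condition says `f (T x + (I - T) y) ≤ t a + (1 - t) b` for all such `a, b`.
Letting `a ↓ f x` and `b ↓ f y` recovers `t f x + (1 - t) f y`, because for `t ∈ [0, 1]` the map
`(u, v) ↦ t u + (1 - t) v` is continuous on `EReal` at every point with `u, v < ⊤`: the sum
`⊥ + ⊤` never occurs, and `u ↦ t u` is continuous even for `t = 0` since `0 · ⊥ = 0`.
-/

open Filter Topology

namespace EReal

lemma coe_mul_ne_top {t : ℝ} (ht : 0 ≤ t) {x : EReal} (hx : x ≠ ⊤) :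
    (t : EReal) * x ≠ ⊤ :=
  (mul_ne_top _ _).2
    ⟨Or.inl (coe_ne_bot t), Or.inl (EReal.coe_nonneg.2 ht), Or.inl (coe_ne_top t), Or.inr hx⟩

lemma continuous_coe_mul (t : ℝ) : Continuous fun u : EReal => (t : EReal) * u :=
  continuous_iff_continuousAt.2 fun _ =>
    Tendsto.const_mul tendsto_id (Or.inl (coe_ne_bot t)) (Or.inl (coe_ne_top t))

lemma continuousAt_coe_mul_add_coe_mul {s t : ℝ} (hs : 0 ≤ s) (ht : 0 ≤ t) {x y : EReal}
    (hx : x ≠ ⊤) (hy : y ≠ ⊤) :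
    ContinuousAt (fun p : EReal × EReal => (s : EReal) * p.1 + (t : EReal) * p.2) (x, y) :=
  (continuousAt_add (Or.inl (coe_mul_ne_top hs hx)) (Or.inr (coe_mul_ne_top ht hy))).comp
    (((continuous_coe_mul s).comp continuous_fst).prodMk
      ((continuous_coe_mul t).comp continuous_snd)).continuousAt

lemma eventually_nhdsGT_exists_coe {x : EReal} (hx : x ≠ ⊤) :
    ∀ᶠ u in 𝓝[>] x, ∃ a : ℝ, (a : EReal) = u ∧ x ≤ a := by
  have hlt : ∀ᶠ u in 𝓝[>] x, u < ⊤ := nhdsWithin_le_nhds (Iio_mem_nhds hx.lt_top)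
  filter_upwards [hlt, self_mem_nhdsWithin] with u hu hxu
  have hu' : (u.toReal : EReal) = u := coe_toReal hu.ne (ne_bot_of_gt hxu)
  exact ⟨u.toReal, hu', hu'.symm ▸ hxu.le⟩

lemma le_of_forall_coe_le_of_continuousAt {c x y : EReal} {g : EReal × EReal → EReal}
    (hx : x ≠ ⊤) (hy : y ≠ ⊤) (hg : ContinuousAt g (x, y))
    (h : ∀ a b : ℝ, x ≤ a → y ≤ b → c ≤ g (a, b)) : c ≤ g (x, y) := by
  have := nhdsGT_neBot_of_exists_gt ⟨⊤, hx.lt_top⟩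
  have := nhdsGT_neBot_of_exists_gt ⟨⊤, hy.lt_top⟩
  have hlim : Tendsto g (𝓝[>] x ×ˢ 𝓝[>] y) (𝓝 (g (x, y))) :=
    hg.tendsto.mono_left <| by
      rw [nhds_prod_eq]; exact prod_mono nhdsWithin_le_nhds nhdsWithin_le_nhds
  refine ge_of_tendsto hlim ?_
  filter_upwards [(eventually_nhdsGT_exists_coe hx).prod_mk (eventually_nhdsGT_exists_coe hy)]
  rintro ⟨u, v⟩ ⟨⟨a, rfl, ha⟩, ⟨b, rfl, hb⟩⟩
  exact h a b ha hb

lemma coe_mul_add_coe_mul_le {s t : ℝ} (hs : 0 ≤ s) (ht : 0 ≤ t) {x y : EReal} {a b : ℝ}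
    (hxa : x ≤ a) (hyb : y ≤ b) :
    (s : EReal) * x + (t : EReal) * y ≤ ((s * a + t * b : ℝ) : EReal) := by
  rw [coe_add, coe_mul, coe_mul]
  exact add_le_add (mul_le_mul_of_nonneg_left hxa (EReal.coe_nonneg.2 hs))
    (mul_le_mul_of_nonneg_left hyb (EReal.coe_nonneg.2 ht))

lemma le_coe_mul_add_coe_mul_of_forall {s t : ℝ} (hs : 0 ≤ s) (ht : 0 ≤ t) {c x y : EReal}
    (hx : x ≠ ⊤) (hy : y ≠ ⊤)
    (h : ∀ a b : ℝ, x ≤ a → y ≤ b → c ≤ ((s * a + t * b : ℝ) : EReal)) :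
    c ≤ (s : EReal) * x + (t : EReal) * y :=
  le_of_forall_coe_le_of_continuousAt (g := fun p => (s : EReal) * p.1 + (t : EReal) * p.2) hx hy
    (continuousAt_coe_mul_add_coe_mul hs ht hx hy) fun a b ha hb => by
      simpa only [coe_add, coe_mul] using h a b ha hb

end EReal

theorem stmt15_general {X : Type*} [AddCommGroup X]
    (ℛ : Set ((X →+ X) × ℝ))
    (hR01 : ∀ r ∈ ℛ, r.2 ∈ Set.Icc (0 : ℝ) 1)
    (D : Set X) (f : X → EReal) (hftop : ∀ x ∈ D, f x ≠ ⊤) :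
    (∀ r ∈ ℛ, (∀ x ∈ D, ∀ y ∈ D, r.1 x + (y - r.1 y) ∈ D) ∧
      ∀ x ∈ D, ∀ y ∈ D,
        f (r.1 x + (y - r.1 y)) ≤ (r.2 : EReal) * f x + ((1 - r.2 : ℝ) : EReal) * f y) ↔
    (∀ r ∈ ℛ, ∀ p ∈ {q : X × ℝ | q.1 ∈ D ∧ f q.1 ≤ (q.2 : EReal)},
      ∀ q ∈ {q : X × ℝ | q.1 ∈ D ∧ f q.1 ≤ (q.2 : EReal)},
      (r.1 p.1 + (q.1 - r.1 q.1), r.2 * p.2 + (1 - r.2) * q.2) ∈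
        {q : X × ℝ | q.1 ∈ D ∧ f q.1 ≤ (q.2 : EReal)}) := by
  constructor
  · rintro h r hr ⟨x, a⟩ ⟨hx, ha⟩ ⟨y, b⟩ ⟨hy, hb⟩
    obtain ⟨ht0, ht1⟩ := hR01 r hr
    exact ⟨(h r hr).1 x hx y hy, ((h r hr).2 x hx y hy).trans
      (EReal.coe_mul_add_coe_mul_le ht0 (sub_nonneg.2 ht1) ha hb)⟩
  · intro h r hr
    obtain ⟨ht0, ht1⟩ := hR01 r hr
    have hle : ∀ x ∈ D, f x ≤ ((f x).toReal : EReal) := fun x hx =>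
      EReal.le_coe_toReal (hftop x hx)
    refine ⟨fun x hx y hy => (h r hr (x, _) ⟨hx, hle x hx⟩ (y, _) ⟨hy, hle y hy⟩).1,
      fun x hx y hy => ?_⟩
    exact EReal.le_coe_mul_add_coe_mul_of_forall ht0 (sub_nonneg.2 ht1) (hftop x hx) (hftop y hy)
      fun a b ha hb => (h r hr (x, a) ⟨hx, ha⟩ (y, b) ⟨hy, hb⟩).2

/-- `f : D → [-∞,∞)` is `ℛ`-convex iff its epigraph is an
`ℛ`-convex subset of `X × ℝ`, where `(T,t)` acts by `(x,u) ↦ (T(x), t·u)`. -/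
theorem stmt15 {X : Type*} [AddCommGroup X]
    (ℛ : Set ((X →+ X) × ℝ)) (hRne : ℛ.Nonempty)
    (hR01 : ∀ r ∈ ℛ, r.2 ∈ Set.Icc (0 : ℝ) 1)
    (D : Set X) (f : X → EReal) (hftop : ∀ x ∈ D, f x ≠ ⊤) :
    (∀ r ∈ ℛ, (∀ x ∈ D, ∀ y ∈ D, r.1 x + (y - r.1 y) ∈ D) ∧
      ∀ x ∈ D, ∀ y ∈ D,
        f (r.1 x + (y - r.1 y)) ≤ (r.2 : EReal) * f x + ((1 - r.2 : ℝ) : EReal) * f y) ↔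
    (∀ r ∈ ℛ, ∀ p ∈ {q : X × ℝ | q.1 ∈ D ∧ f q.1 ≤ (q.2 : EReal)},
      ∀ q ∈ {q : X × ℝ | q.1 ∈ D ∧ f q.1 ≤ (q.2 : EReal)},
      (r.1 p.1 + (q.1 - r.1 q.1), r.2 * p.2 + (1 - r.2) * q.2) ∈
        {q : X × ℝ | q.1 ∈ D ∧ f q.1 ≤ (q.2 : EReal)}) :=
  stmt15_general ℛ hR01 D f hftop
end

section
/- If f : D → [-∞,+∞) and g : E → [-∞,+∞) are ℛ-convex functions (D, E ⊆ X), then the infimal convolution (f * g)(x) := inf{ f(u) + g(v) : u ∈ D, v ∈ E, u+v = x } is ℛ-convex on D + E. -/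
/-! If `u₁ + v₁ = x` and `u₂ + v₂ = y` with `uᵢ ∈ D`, `vᵢ ∈ E`, then, `T` being additive,
the `(T, t)`-combinations of the `uᵢ` and of the `vᵢ` lie in `D` and `E` and add up to the
`(T, t)`-combination of `x` and `y`. Adding the convexity inequalities of `f` and `g` bounds
`f * g` there by `t (f u₁ + g v₁) + (1 - t) (f u₂ + g v₂)`; taking the infimum over both
decompositions gives the claim. -/

open scoped Pointwise

namespace EReal

lemma exists_coe_mul_lt_of_coe_mul_sInf_lt {t : ℝ} (ht : 0 ≤ t) {S : Set EReal}
    (hS : S.Nonempty) {a : EReal} (h : (t : EReal) * sInf S < a) :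
    ∃ m ∈ S, (t : EReal) * m < a := by
  rcases ht.eq_or_lt with rfl | ht
  · obtain ⟨m, hm⟩ := hS
    exact ⟨m, hm, by simpa using h⟩
  · have ht' : (0 : EReal) < t := EReal.coe_pos.2 ht
    obtain ⟨m, hm, hlt⟩ := sInf_lt_iff.1 <| show sInf S < a / t by
      rwa [lt_div_iff ht' (coe_ne_top t), EReal.mul_comm]
    exact ⟨m, hm, by rwa [lt_div_iff ht' (coe_ne_top t), EReal.mul_comm] at hlt⟩

lemma coe_mul_ne_top_of_nonneg {t : ℝ} (ht : 0 ≤ t) {a : EReal} (ha : a ≠ ⊤) :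
    (t : EReal) * a ≠ ⊤ :=
  (mul_ne_top _ _).2
    ⟨.inl (coe_ne_bot t), .inl (EReal.coe_nonneg.2 ht), .inl (coe_ne_top t), .inr ha⟩

lemma le_coe_mul_sInf_add_coe_mul_sInf {s t : ℝ} (hs : 0 ≤ s) (ht : 0 ≤ t) {S T : Set EReal}
    (hS : sInf S ≠ ⊤) (hT : sInf T ≠ ⊤) {c : EReal}
    (h : ∀ p ∈ S, ∀ q ∈ T, c ≤ s * p + t * q) :
    c ≤ s * sInf S + t * sInf T := by
  refine le_add_of_forall_gt (.inr (coe_mul_ne_top_of_nonneg ht hT))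
    (.inl (coe_mul_ne_top_of_nonneg hs hS)) fun a ha b hb => ?_
  obtain ⟨p, hp, hpa⟩ := exists_coe_mul_lt_of_coe_mul_sInf_lt hs
    (Set.nonempty_iff_ne_empty.2 <| by rintro rfl; exact hS sInf_empty) ha
  obtain ⟨q, hq, hqb⟩ := exists_coe_mul_lt_of_coe_mul_sInf_lt ht
    (Set.nonempty_iff_ne_empty.2 <| by rintro rfl; exact hT sInf_empty) hb
  exact (h p hp q hq).trans (add_le_add hpa.le hqb.le)

lemma coe_mul_add_coe_mul_add_add {s t : ℝ} (hs : 0 ≤ s) (ht : 0 ≤ t) (a b c d : EReal) :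
    ((s : EReal) * a + t * b) + (s * c + t * d) = s * (a + c) + t * (b + d) := by
  rw [left_distrib_of_nonneg_of_ne_top (EReal.coe_nonneg.2 hs) (coe_ne_top s),
    left_distrib_of_nonneg_of_ne_top (EReal.coe_nonneg.2 ht) (coe_ne_top t), add_add_add_comm]

end EReal

lemma AddMonoidHom.map_add_add_sub_map_add_s16 {X : Type*} [AddCommGroup X] (T : X →+ X)
    (u₁ v₁ u₂ v₂ : X) :
    T (u₁ + v₁) + (u₂ + v₂ - T (u₂ + v₂)) =
      (T u₁ + (u₂ - T u₂)) + (T v₁ + (v₂ - T v₂)) := by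
  simp only [map_add]
  abel

theorem stmt16_general {X : Type*} [AddCommGroup X]
    (ℛ : Set ((X →+ X) × ℝ))
    (hR01 : ∀ r ∈ ℛ, r.2 ∈ Set.Icc (0 : ℝ) 1)
    (D E : Set X) (f g : X → EReal)
    (hD : ∀ r ∈ ℛ, ∀ x ∈ D, ∀ y ∈ D, r.1 x + (y - r.1 y) ∈ D)
    (hE : ∀ r ∈ ℛ, ∀ x ∈ E, ∀ y ∈ E, r.1 x + (y - r.1 y) ∈ E)
    (hf : ∀ r ∈ ℛ, ∀ x ∈ D, ∀ y ∈ D,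
      f (r.1 x + (y - r.1 y)) ≤ (r.2 : EReal) * f x + ((1 - r.2 : ℝ) : EReal) * f y)
    (hg : ∀ r ∈ ℛ, ∀ x ∈ E, ∀ y ∈ E,
      g (r.1 x + (y - r.1 y)) ≤ (r.2 : EReal) * g x + ((1 - r.2 : ℝ) : EReal) * g y)
    (h : X → EReal)
    (hdef : ∀ x, h x = sInf {m : EReal | ∃ u ∈ D, ∃ v ∈ E, u + v = x ∧ m = f u + g v})
    (hhtop : ∀ x ∈ D + E, h x ≠ ⊤) :
    ∀ r ∈ ℛ, ∀ x ∈ D + E, ∀ y ∈ D + E,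
      h (r.1 x + (y - r.1 y)) ≤ (r.2 : EReal) * h x + ((1 - r.2 : ℝ) : EReal) * h y := by
  intro r hr x hx y hy
  obtain ⟨ht0, ht1⟩ := hR01 r hr
  have hx' := hhtop x hx
  have hy' := hhtop y hy
  rw [hdef x] at hx' ⊢
  rw [hdef y] at hy' ⊢
  refine EReal.le_coe_mul_sInf_add_coe_mul_sInf ht0 (sub_nonneg.2 ht1) hx' hy' ?_
  rintro _ ⟨u₁, hu₁, v₁, hv₁, rfl, rfl⟩ _ ⟨u₂, hu₂, v₂, hv₂, rfl, rfl⟩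
  calc h (r.1 (u₁ + v₁) + (u₂ + v₂ - r.1 (u₂ + v₂)))
      ≤ f (r.1 u₁ + (u₂ - r.1 u₂)) + g (r.1 v₁ + (v₂ - r.1 v₂)) :=
        hdef _ ▸ sInf_le ⟨_, hD r hr u₁ hu₁ u₂ hu₂, _, hE r hr v₁ hv₁ v₂ hv₂,
          (r.1.map_add_add_sub_map_add_s16 u₁ v₁ u₂ v₂).symm, rfl⟩
    _ ≤ (r.2 * f u₁ + ((1 - r.2 : ℝ) : EReal) * f u₂) +
          (r.2 * g v₁ + ((1 - r.2 : ℝ) : EReal) * g v₂) :=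
        add_le_add (hf r hr u₁ hu₁ u₂ hu₂) (hg r hr v₁ hv₁ v₂ hv₂)
    _ = r.2 * (f u₁ + g v₁) + ((1 - r.2 : ℝ) : EReal) * (f u₂ + g v₂) :=
        EReal.coe_mul_add_coe_mul_add_add ht0 (sub_nonneg.2 ht1) _ _ _ _

/-- The infimal convolution of two `ℛ`-convex functions is
`ℛ`-convex on `D + E`. -/
theorem stmt16 {X : Type*} [AddCommGroup X]
    (ℛ : Set ((X →+ X) × ℝ)) (hRne : ℛ.Nonempty)
    (hR01 : ∀ r ∈ ℛ, r.2 ∈ Set.Icc (0 : ℝ) 1)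
    (D E : Set X) (f g : X → EReal)
    (hftop : ∀ x ∈ D, f x ≠ ⊤) (hgtop : ∀ x ∈ E, g x ≠ ⊤)
    (hD : ∀ r ∈ ℛ, ∀ x ∈ D, ∀ y ∈ D, r.1 x + (y - r.1 y) ∈ D)
    (hE : ∀ r ∈ ℛ, ∀ x ∈ E, ∀ y ∈ E, r.1 x + (y - r.1 y) ∈ E)
    (hf : ∀ r ∈ ℛ, ∀ x ∈ D, ∀ y ∈ D,
      f (r.1 x + (y - r.1 y)) ≤ (r.2 : EReal) * f x + ((1 - r.2 : ℝ) : EReal) * f y)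
    (hg : ∀ r ∈ ℛ, ∀ x ∈ E, ∀ y ∈ E,
      g (r.1 x + (y - r.1 y)) ≤ (r.2 : EReal) * g x + ((1 - r.2 : ℝ) : EReal) * g y)
    (h : X → EReal)
    (hdef : ∀ x, h x = sInf {m : EReal | ∃ u ∈ D, ∃ v ∈ E, u + v = x ∧ m = f u + g v})
    (hhtop : ∀ x ∈ D + E, h x ≠ ⊤) :
    ∀ r ∈ ℛ, ∀ x ∈ D + E, ∀ y ∈ D + E,
      h (r.1 x + (y - r.1 y)) ≤ (r.2 : EReal) * h x + ((1 - r.2 : ℝ) : EReal) * h y :=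
  stmt16_general ℛ hR01 D E f g hD hE hf hg h hdef hhtop
end
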